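/- arXiv:1303.2382 — 5 statements merged into one kernel-verified Lean document; each statement's English description precedes it below -/
import Mathlib

section
/- For all a>0, b>0 and every f ∈ C_c^∞(ℝ,ℂ) with ∫_ℝ |f(t)|² dt = a one has ∫_ℝ |f'(t)|² dt − b ∫_ℝ |f(t)|⁴ dt ≥ − b² a³ / 12. -/
open MeasureTheory

noncomputable section

/-- We model `ℝ³` as `(ℝ × ℝ) × ℝ`, writing `x = (x_⊥, x₃)`. -/
abbrev R3 := (ℝ × ℝ) × ℝ

/-- The Euclidean norm `|x|` on `ℝ³`. -/
def enorm3 (x : R3) : ℝ := Real.sqrt (x.1.1 ^ 2 + x.1.2 ^ 2 + x.2 ^ 2)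

/-- The partial derivative `∂₁φ`. -/
def d1 (φ : R3 → ℂ) (x : R3) : ℂ := fderiv ℝ φ x ((1, 0), 0)

/-- The partial derivative `∂₂φ`. -/
def d2 (φ : R3 → ℂ) (x : R3) : ℂ := fderiv ℝ φ x ((0, 1), 0)

/-- The partial derivative `∂₃φ`. -/
def d3 (φ : R3 → ℂ) (x : R3) : ℂ := fderiv ℝ φ x ((0, 0), 1)

/-- The perpendicular part of the magnetic kinetic energy in the symmetric gauge
`A(x) = ((-B/2)x₂, (B/2)x₁, 0)`:
`∫ (|−i∂₁φ−(B/2)x₂φ|² + |−i∂₂φ+(B/2)x₁φ|²) dx`. -/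
def kinPerp (B : ℝ) (φ : R3 → ℂ) : ℝ :=
  ∫ x : R3, (‖-Complex.I * d1 φ x - ((B / 2 * x.1.2 : ℝ) : ℂ) * φ x‖ ^ 2
    + ‖-Complex.I * d2 φ x + ((B / 2 * x.1.1 : ℝ) : ℂ) * φ x‖ ^ 2)

/-- The full magnetic kinetic energy
`∫ (|−i∂₁φ−(B/2)x₂φ|² + |−i∂₂φ+(B/2)x₁φ|² + |∂₃φ|²) dx`. -/
def kinEnergy (B : ℝ) (φ : R3 → ℂ) : ℝ :=
  ∫ x : R3, (‖-Complex.I * d1 φ x - ((B / 2 * x.1.2 : ℝ) : ℂ) * φ x‖ ^ 2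
    + ‖-Complex.I * d2 φ x + ((B / 2 * x.1.1 : ℝ) : ℂ) * φ x‖ ^ 2
    + ‖d3 φ x‖ ^ 2)

/-- The Coulomb self-energy `∬ |φ(x)|²|φ(y)|²|x−y|⁻¹ dx dy` (without the factor 1/2). -/
def coulomb (φ : R3 → ℂ) : ℝ :=
  ∫ x : R3, ∫ y : R3, ‖φ x‖ ^ 2 * ‖φ y‖ ^ 2 / enorm3 (x - y)

/-- `D(|φ|²,|φ|²) = (1/2) ∬ |φ(x)|²|φ(y)|²|x−y|⁻¹ dx dy`. -/
def Dself (φ : R3 → ℂ) : ℝ := (1 / 2) * coulomb φ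

/-- The Pekar functional `E_{B,α}[φ]`. -/
def pekar (B α : ℝ) (φ : R3 → ℂ) : ℝ := kinEnergy B φ - α / 2 * coulomb φ

/-- `φ ∈ C_c^∞(ℝ³, ℂ)`. -/
def IsCcSmooth (φ : R3 → ℂ) : Prop := ContDiff ℝ (⊤ : ℕ∞) φ ∧ HasCompactSupport φ

/-- The Pekar ground state energy `E^c_{B,α}`, an infimum over normalized
compactly supported smooth functions. -/
def groundE (B α : ℝ) : ℝ :=
  sInf {E : ℝ | ∃ φ : R3 → ℂ, IsCcSmooth φ ∧ (∫ x : R3, ‖φ x‖ ^ 2) = 1 ∧ E = pekar B α φ}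

/-- The `L²(ℝ³)` norm `‖φ‖`. -/
def L2norm (φ : R3 → ℂ) : ℝ := Real.sqrt (∫ x : R3, ‖φ x‖ ^ 2)

/-- The `L²(ℝ³)` norm `‖∂₃φ‖`. -/
def L2normD3 (φ : R3 → ℂ) : ℝ := Real.sqrt (∫ x : R3, ‖d3 φ x‖ ^ 2)

/-- The kernel `K_B(x_⊥) = ln(1+√(1+(ln B)²|x_⊥|²)) − ln(√B |x_⊥|)` on `ℝ²`. -/
def Kker (B : ℝ) (p : ℝ × ℝ) : ℝ :=
  Real.log (1 + Real.sqrt (1 + Real.log B ^ 2 * (p.1 ^ 2 + p.2 ^ 2)))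
    - Real.log (Real.sqrt B * Real.sqrt (p.1 ^ 2 + p.2 ^ 2))

/-- The remainder term
`R_B^{(2)}(φ) = ∫_ℝ ∬_{ℝ²×ℝ²} |φ(x_⊥,x₃)|² |φ(y_⊥,x₃)|² K_B(x_⊥−y_⊥) dy_⊥ dx_⊥ dx₃`. -/
def R2err (B : ℝ) (φ : R3 → ℂ) : ℝ :=
  ∫ x3 : ℝ, ∫ xp : ℝ × ℝ, ∫ yp : ℝ × ℝ,
    ‖φ (xp, x3)‖ ^ 2 * ‖φ (yp, x3)‖ ^ 2 * Kker B (xp - yp)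

/-- The integral kernel of the lowest Landau level projection:
`P₀(x_⊥,y_⊥) = (B/(2π)) e^{−B|x_⊥−y_⊥|²/4} e^{iB(x₁y₂−x₂y₁)/2}`. -/
def P0ker (B : ℝ) (x y : ℝ × ℝ) : ℂ :=
  ((B / (2 * Real.pi) * Real.exp (-B * ((x.1 - y.1) ^ 2 + (x.2 - y.2) ^ 2) / 4) : ℝ) : ℂ)
    * Complex.exp (Complex.I * ((B * (x.1 * y.2 - x.2 * y.1) / 2 : ℝ) : ℂ))

/-- The lowest Landau level projection acting on functions on `ℝ³` (in the `x_⊥` variables). -/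
def P0 (B : ℝ) (φ : R3 → ℂ) : R3 → ℂ :=
  fun x => ∫ yp : ℝ × ℝ, P0ker B x.1 yp * φ (yp, x.2)

/-- `P_> φ = φ − P₀ φ`. -/
def Pgt (B : ℝ) (φ : R3 → ℂ) : R3 → ℂ := fun x => φ x - P0 B φ x

/-- The quadratic form of the two-dimensional Landau Hamiltonian
`H_B = (−i∂₁ + A₁)² + (−i∂₂ + A₂)²` in the symmetric gauge. -/
def kin2 (B : ℝ) (g : ℝ × ℝ → ℂ) : ℝ :=
  ∫ x : ℝ × ℝ, (‖-Complex.I * fderiv ℝ g x (1, 0) - ((B / 2 * x.2 : ℝ) : ℂ) * g x‖ ^ 2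
    + ‖-Complex.I * fderiv ℝ g x (0, 1) + ((B / 2 * x.1 : ℝ) : ℂ) * g x‖ ^ 2)

/-- The kernel `I_{k_⊥}(x_⊥,y_⊥) = P₀(x_⊥,y_⊥) e^{k_⊥∧(x_⊥−y_⊥)/2} e^{i k_⊥·(x_⊥+y_⊥)/2}`
with `a∧b = a₁b₂ − a₂b₁`. -/
def Iker (B : ℝ) (k x y : ℝ × ℝ) : ℂ :=
  P0ker B x y * ((Real.exp ((k.1 * (x.2 - y.2) - k.2 * (x.1 - y.1)) / 2) : ℝ) : ℂ)
    * Complex.exp (Complex.I * (((k.1 * (x.1 + y.1) + k.2 * (x.2 + y.2)) / 2 : ℝ) : ℂ))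

/-!
Expanding `0 ≤ ‖f' - c f‖²` for a real `C¹` weight `c` and integrating `c (‖f‖²)'` by parts gives
`∫ ‖f'‖² ≥ -∫ (c' + c²) ‖f‖²`. The weight `c = b (a/2 - F)`, with `F(t) = ∫_{-∞}^t ‖f‖²`, solves
`c' = -b ‖f‖²`, so the right-hand side becomes `b ∫ ‖f‖⁴ - b² ∫ (a/2 - F)² dF`, and the last
integral is `a³/12`.
-/

open intervalIntegral Set
open scoped InnerProductSpace

theorem integral_sq_half_sub_primitive_mul {g : ℝ → ℝ} (hg : Continuous g) (α β : ℝ) :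
    ∫ t in α..β, ((∫ s in α..β, g s) / 2 - ∫ s in α..t, g s) ^ 2 * g t
      = (∫ s in α..β, g s) ^ 3 / 12 := by
  set a := ∫ s in α..β, g s
  have hG : ∀ t, HasDerivAt (fun t => -(a / 2 - ∫ s in α..t, g s) ^ 3 / 3)
      ((a / 2 - ∫ s in α..t, g s) ^ 2 * g t) t := fun t => by
    refine ((((hg.integral_hasStrictDerivAt α t).hasDerivAt.const_sub (a / 2)).fun_pow 3).fun_neg
      |>.div_const 3).congr_deriv ?_
    ring
  rw [integral_eq_sub_of_hasDerivAt (fun t _ => hG t) (Continuous.intervalIntegrable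
    (by fun_prop) _ _), integral_same]
  ring

section InnerProductSpace

variable {E : Type*} [NormedAddCommGroup E] [InnerProductSpace ℝ E]

theorem two_mul_mul_inner_sub_sq_mul_norm_sq_le (c : ℝ) (u v : E) :
    2 * c * ⟪u, v⟫_ℝ - c ^ 2 * ‖u‖ ^ 2 ≤ ‖v‖ ^ 2 := by
  have h := norm_sub_sq_real v (c • u)
  rw [real_inner_smul_right, norm_smul, Real.norm_eq_abs, mul_pow, sq_abs,
    real_inner_comm] at h
  nlinarith [sq_nonneg ‖v - c • u‖]

theorem neg_integral_mul_norm_sq_le_integral_norm_deriv_sq {f : ℝ → E} (hf : ContDiff ℝ 1 f)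
    {α β : ℝ} (hαβ : α ≤ β) (hα : f α = 0) (hβ : f β = 0) {c c' : ℝ → ℝ}
    (hc : ∀ t, HasDerivAt c (c' t) t) (hc' : Continuous c') :
    -∫ t in α..β, (c' t + c t ^ 2) * ‖f t‖ ^ 2 ≤ ∫ t in α..β, ‖deriv f t‖ ^ 2 := by
  have hfc : Continuous f := hf.continuous
  have hdf : Continuous (deriv f) := hf.continuous_deriv le_rfl
  have hcc : Continuous c := continuous_iff_continuousAt.2 fun t => (hc t).continuousAt
  have hderiv : ∀ t, HasDerivAt (fun t => c t * ‖f t‖ ^ 2)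
      (c' t * ‖f t‖ ^ 2 + c t * (2 * ⟪f t, deriv f t⟫_ℝ)) t := fun t =>
    (hc t).mul (hf.differentiable one_ne_zero t).hasDerivAt.norm_sq
  have hboundary : ∫ t in α..β, (c' t * ‖f t‖ ^ 2 + c t * (2 * ⟪f t, deriv f t⟫_ℝ)) = 0 := by
    rw [integral_eq_sub_of_hasDerivAt (fun t _ => hderiv t) (Continuous.intervalIntegrable
      (by fun_prop) _ _), hα, hβ]
    simp
  calc -∫ t in α..β, (c' t + c t ^ 2) * ‖f t‖ ^ 2
      = (∫ t in α..β, (c' t * ‖f t‖ ^ 2 + c t * (2 * ⟪f t, deriv f t⟫_ℝ)))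
          - ∫ t in α..β, (c' t + c t ^ 2) * ‖f t‖ ^ 2 := by rw [hboundary, zero_sub]
    _ = ∫ t in α..β, (2 * c t * ⟪f t, deriv f t⟫_ℝ - c t ^ 2 * ‖f t‖ ^ 2) := by
      rw [← integral_sub (Continuous.intervalIntegrable (by fun_prop) _ _)
        (Continuous.intervalIntegrable (by fun_prop) _ _)]
      congr 1 with t
      ring
    _ ≤ ∫ t in α..β, ‖deriv f t‖ ^ 2 :=
      integral_mono_on hαβ (Continuous.intervalIntegrable (by fun_prop) _ _)
        (Continuous.intervalIntegrable (by fun_prop) _ _)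
        fun t _ => two_mul_mul_inner_sub_sq_mul_norm_sq_le _ _ _

theorem neg_mul_cube_integral_norm_sq_div_twelve_le {f : ℝ → E} (hf : ContDiff ℝ 1 f)
    {α β : ℝ} (hαβ : α ≤ β) (hα : f α = 0) (hβ : f β = 0) (b : ℝ) :
    -(b ^ 2 * (∫ t in α..β, ‖f t‖ ^ 2) ^ 3) / 12
      ≤ (∫ t in α..β, ‖deriv f t‖ ^ 2) - b * ∫ t in α..β, ‖f t‖ ^ 4 := by
  have hρ : Continuous fun t => ‖f t‖ ^ 2 := by fun_prop
  set a := ∫ t in α..β, ‖f t‖ ^ 2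
  set F := fun t => ∫ s in α..t, ‖f s‖ ^ 2
  have hc : ∀ t, HasDerivAt (fun t => b * (a / 2 - F t)) (-(b * ‖f t‖ ^ 2)) t := fun t =>
    (((hρ.integral_hasStrictDerivAt α t).hasDerivAt.const_sub (a / 2)).const_mul b).congr_deriv
      (by ring)
  have hF : Continuous F := continuous_iff_continuousAt.2 fun t =>
    (hρ.integral_hasStrictDerivAt α t).hasDerivAt.continuousAt
  have hcalib := neg_integral_mul_norm_sq_le_integral_norm_deriv_sq hf hαβ hα hβ hc
    (by fun_prop)
  have hcube : ∫ t in α..β, (a / 2 - F t) ^ 2 * ‖f t‖ ^ 2 = a ^ 3 / 12 :=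
    integral_sq_half_sub_primitive_mul hρ α β
  calc -(b ^ 2 * a ^ 3) / 12
      = (b * ∫ t in α..β, ‖f t‖ ^ 4) - b ^ 2 * (∫ t in α..β, (a / 2 - F t) ^ 2 * ‖f t‖ ^ 2)
          - b * ∫ t in α..β, ‖f t‖ ^ 4 := by
        rw [hcube]
        ring
    _ = -(∫ t in α..β, (-(b * ‖f t‖ ^ 2) + (b * (a / 2 - F t)) ^ 2) * ‖f t‖ ^ 2)
          - b * ∫ t in α..β, ‖f t‖ ^ 4 := by
        rw [← intervalIntegral.integral_const_mul, ← intervalIntegral.integral_const_mul,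
          ← integral_sub (Continuous.intervalIntegrable (by fun_prop) _ _)
            (Continuous.intervalIntegrable (by fun_prop) _ _), ← intervalIntegral.integral_neg]
        congr 2 with t
        ring
    _ ≤ _ := sub_le_sub_right hcalib _

end InnerProductSpace

theorem integral_norm_pow_eq_intervalIntegral {F : Type*} [NormedAddCommGroup F] {g : ℝ → F}
    {α β : ℝ} (hg : tsupport g ⊆ Ioo α β) {n : ℕ} (hn : n ≠ 0) :
    ∫ t, ‖g t‖ ^ n = ∫ t in α..β, ‖g t‖ ^ n := by
  refine (integral_eq_integral_of_support_subset fun t ht => ?_).symm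
  refine Ioo_subset_Ioc_self (hg (subset_tsupport g fun hgt => ht ?_))
  simp [hgt, hn]

theorem one_dim_lower_bound_general (a b : ℝ)
    (f : ℝ → ℂ) (hf : ContDiff ℝ (⊤ : ℕ∞) f) (hsupp : HasCompactSupport f)
    (hnorm : (∫ t : ℝ, ‖f t‖ ^ 2) = a) :
    (∫ t : ℝ, ‖deriv f t‖ ^ 2) - b * ∫ t : ℝ, ‖f t‖ ^ 4 ≥ -(b ^ 2 * a ^ 3) / 12 := by
  obtain ⟨R, hR0, hR⟩ := hsupp.isBounded.subset_ball_lt 0 0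
  rw [Real.ball_eq_Ioo, zero_sub, zero_add] at hR
  have hvanish : ∀ t ∉ Ioo (-R) R, f t = 0 := fun t ht =>
    image_eq_zero_of_notMem_tsupport fun h => ht (hR h)
  have hf1 : ContDiff ℝ 1 f := hf.of_le (by exact_mod_cast le_top)
  rw [← hnorm, ge_iff_le, integral_norm_pow_eq_intervalIntegral hR two_ne_zero,
    integral_norm_pow_eq_intervalIntegral hR four_ne_zero,
    integral_norm_pow_eq_intervalIntegral (tsupport_deriv_subset.trans hR) two_ne_zero]
  exact neg_mul_cube_integral_norm_sq_div_twelve_le hf1 (by linarith) (hvanish _ (by simp))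
    (hvanish _ (by simp)) b

/-- Lower bound in the one-dimensional Pekar minimization problem. -/
theorem one_dim_lower_bound (a b : ℝ) (ha : 0 < a) (hb : 0 < b)
    (f : ℝ → ℂ) (hf : ContDiff ℝ (⊤ : ℕ∞) f) (hsupp : HasCompactSupport f)
    (hnorm : (∫ t : ℝ, ‖f t‖ ^ 2) = a) :
    (∫ t : ℝ, ‖deriv f t‖ ^ 2) - b * ∫ t : ℝ, ‖f t‖ ^ 4 ≥ -(b ^ 2 * a ^ 3) / 12 :=
  one_dim_lower_bound_general a b f hf hsupp hnorm
end
end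

section
/- For all a>0 and b>0 the function f_{a,b}(t) = (a√b/2) (cosh(a b t/2))⁻¹ satisfies ∫_ℝ |f_{a,b}(t)|² dt = a and ∫_ℝ |f_{a,b}'(t)|² dt − b ∫_ℝ |f_{a,b}(t)|⁴ dt = − b² a³ / 12. -/
open MeasureTheory

noncomputable section

/-- The explicit minimizer `f_{a,b}(t) = (a√b/2)(cosh(abt/2))⁻¹`. -/
def fab (a b : ℝ) (t : ℝ) : ℝ := a * Real.sqrt b / 2 * (Real.cosh (a * b * t / 2))⁻¹

/-! With `k = ab/2` and `c = a√b/2` we have `f_{a,b}(t) = c·sech(kt)` and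
`f_{a,b}'(t) = -ck·tanh(kt)·sech(kt)`. Since `sech² = 1 - tanh²`, each of the three integrands is
`g(tanh(kt))·sech²(kt)` for a polynomial `g`, and `sech²(kt)` is the derivative of `tanh(kt)/k`,
which runs from `-1/k` to `1/k`; so each integral is `(G(1) - G(-1))/k` for an antiderivative `G`
of `g`. -/

open Real Filter Topology Set

namespace Real

theorem one_sub_tanh_sq (x : ℝ) : 1 - tanh x ^ 2 = (cosh x)⁻¹ ^ 2 := by
  have hcosh := (cosh_pos x).ne'
  rw [tanh_eq_sinh_div_cosh]
  field_simp
  linear_combination cosh_sq_sub_sinh_sq x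

theorem hasDerivAt_tanh (x : ℝ) : HasDerivAt tanh ((cosh x)⁻¹ ^ 2) x := by
  have hcosh := (cosh_pos x).ne'
  rw [show tanh = fun y => sinh y / cosh y from funext tanh_eq_sinh_div_cosh]
  refine ((hasDerivAt_sinh x).div (hasDerivAt_cosh x) hcosh).congr_deriv ?_
  rw [← sq, ← sq, cosh_sq_sub_sinh_sq, inv_pow, one_div]

theorem tanh_eq_one_sub_two_div (x : ℝ) : tanh x = 1 - 2 / (exp (2 * x) + 1) := by
  rw [tanh_eq, exp_neg, two_mul, exp_add]
  have := exp_pos x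
  field_simp
  ring

theorem tendsto_tanh_atTop : Tendsto tanh atTop (𝓝 1) := by
  have hexp : Tendsto (fun x => exp (2 * x) + 1) atTop atTop :=
    tendsto_atTop_add_const_right _ 1
      (tendsto_exp_atTop.comp (tendsto_id.const_mul_atTop two_pos))
  rw [show tanh = fun x => 1 - 2 / (exp (2 * x) + 1) from funext tanh_eq_one_sub_two_div]
  simpa using (tendsto_const_nhds (x := (1 : ℝ))).sub (tendsto_const_nhds.div_atTop hexp)

theorem tendsto_tanh_atBot : Tendsto tanh atBot (𝓝 (-1)) := by
  convert (tendsto_tanh_atTop.comp tendsto_neg_atBot_atTop).neg using 1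
  funext x
  simp [tanh_neg]

end Real

theorem integrable_of_hasDerivAt_of_nonneg {F f : ℝ → ℝ} {l l' : ℝ}
    (hderiv : ∀ x, HasDerivAt F (f x) x) (hf : ∀ x, 0 ≤ f x)
    (hbot : Tendsto F atBot (𝓝 l)) (htop : Tendsto F atTop (𝓝 l')) : Integrable f := by
  have hcont : Continuous F := continuous_iff_continuousAt.2 fun x => (hderiv x).continuousAt
  have hint (a b : ℝ) : IntervalIntegrable f volume a b :=
    intervalIntegral.intervalIntegrable_deriv_of_nonneg hcont.continuousOn
      (fun x _ => hderiv x) (fun x _ => hf x)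
  refine integrable_of_intervalIntegral_norm_tendsto (l' - l)
    (fun i => (hint (-i) i).1) tendsto_neg_atTop_atBot tendsto_id ?_
  have hftc (i : ℝ) : ∫ x in -i..i, ‖f x‖ = F i - F (-i) := by
    simp_rw [Real.norm_of_nonneg (hf _)]
    exact intervalIntegral.integral_eq_sub_of_hasDerivAt (fun x _ => hderiv x) (hint _ _)
  simp_rw [hftc]
  exact htop.sub (hbot.comp tendsto_neg_atTop_atBot)

theorem integral_of_hasDerivAt_of_nonneg {F f : ℝ → ℝ} {l l' : ℝ}
    (hderiv : ∀ x, HasDerivAt F (f x) x) (hf : ∀ x, 0 ≤ f x)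
    (hbot : Tendsto F atBot (𝓝 l)) (htop : Tendsto F atTop (𝓝 l')) : ∫ x, f x = l' - l :=
  integral_of_hasDerivAt_of_tendsto hderiv
    (integrable_of_hasDerivAt_of_nonneg hderiv hf hbot htop) hbot htop

theorem integral_comp_tanh_mul_inv_cosh_sq {G g : ℝ → ℝ} {k : ℝ} (hk : 0 < k)
    (hG : ∀ u, HasDerivAt G (g u) u) (hg : ∀ u ∈ Ioo (-1) 1, 0 ≤ g u) :
    ∫ t, g (tanh (k * t)) * (cosh (k * t))⁻¹ ^ 2 = (G 1 - G (-1)) / k := by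
  have hderiv (t : ℝ) : HasDerivAt (fun t => G (tanh (k * t)) / k)
      (g (tanh (k * t)) * (cosh (k * t))⁻¹ ^ 2) t := by
    refine (((hG _).comp t ((hasDerivAt_tanh _).comp t
      ((hasDerivAt_id t).const_mul k))).div_const k).congr_deriv ?_
    simp only [Function.comp_apply, id, mul_one]
    field_simp
  have hlim {l : Filter ℝ} {u : ℝ} (h : Tendsto (fun t => tanh (k * t)) l (𝓝 u)) :
      Tendsto (fun t => G (tanh (k * t)) / k) l (𝓝 (G u / k)) :=
    ((hG u).continuousAt.tendsto.comp h).div_const k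
  rw [integral_of_hasDerivAt_of_nonneg hderiv
    (fun t => mul_nonneg (hg _ ⟨neg_one_lt_tanh _, tanh_lt_one _⟩) (sq_nonneg _))
    (hlim (tendsto_tanh_atBot.comp (tendsto_id.const_mul_atBot hk)))
    (hlim (tendsto_tanh_atTop.comp (tendsto_id.const_mul_atTop hk)))]
  ring

theorem integral_mul_inv_cosh_sq {k : ℝ} (hk : 0 < k) (c : ℝ) :
    ∫ t, (c * (cosh (k * t))⁻¹) ^ 2 = 2 * c ^ 2 / k := by
  have hG (u : ℝ) : HasDerivAt (fun u => c ^ 2 * u) (c ^ 2) u := by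
    simpa using (hasDerivAt_id' u).const_mul (c ^ 2)
  have h := integral_comp_tanh_mul_inv_cosh_sq hk hG (fun _ _ => sq_nonneg c)
  simp only [mul_pow, h]
  ring

theorem integral_mul_inv_cosh_pow_four {k : ℝ} (hk : 0 < k) (c : ℝ) :
    ∫ t, (c * (cosh (k * t))⁻¹) ^ 4 = 4 * c ^ 4 / (3 * k) := by
  have hG (u : ℝ) : HasDerivAt (fun u => c ^ 4 * (u - u ^ 3 / 3)) (c ^ 4 * (1 - u ^ 2)) u := by
    refine (((hasDerivAt_id' u).sub ((hasDerivAt_pow 3 u).div_const 3)).const_mul _).congr_deriv ?_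
    ring
  have hg (u : ℝ) (hu : u ∈ Ioo (-1) 1) : 0 ≤ c ^ 4 * (1 - u ^ 2) := by
    have : u ^ 2 < 1 := by nlinarith [hu.1, hu.2]
    positivity
  have h := integral_comp_tanh_mul_inv_cosh_sq hk hG hg
  simp only [mul_assoc, one_sub_tanh_sq, ← pow_add] at h
  simp only [mul_pow, h]
  ring

theorem hasDerivAt_mul_inv_cosh (c k t : ℝ) :
    HasDerivAt (fun t => c * (cosh (k * t))⁻¹)
      (-(c * k) * tanh (k * t) * (cosh (k * t))⁻¹) t := by
  have hcosh := (cosh_pos (k * t)).ne'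
  refine ((((hasDerivAt_cosh _).comp t ((hasDerivAt_id' t).const_mul k)).inv hcosh).const_mul
    c).congr_deriv ?_
  rw [tanh_eq_sinh_div_cosh, Function.comp_apply]
  field_simp

theorem integral_deriv_mul_inv_cosh_sq {k : ℝ} (hk : 0 < k) (c : ℝ) :
    ∫ t, deriv (fun t => c * (cosh (k * t))⁻¹) t ^ 2 = 2 * c ^ 2 * k / 3 := by
  have hG (u : ℝ) : HasDerivAt (fun u => (c * k) ^ 2 * (u ^ 3 / 3)) ((c * k) ^ 2 * u ^ 2) u := by
    refine (((hasDerivAt_pow 3 u).div_const 3).const_mul _).congr_deriv ?_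
    ring
  have h := integral_comp_tanh_mul_inv_cosh_sq hk hG (fun _ _ => by positivity)
  have hsq (t : ℝ) : (-(c * k) * tanh (k * t) * (cosh (k * t))⁻¹) ^ 2
      = (c * k) ^ 2 * tanh (k * t) ^ 2 * (cosh (k * t))⁻¹ ^ 2 := by ring
  simp only [(hasDerivAt_mul_inv_cosh c k _).deriv, hsq, h]
  field_simp
  ring

/-- `f_{a,b}` has mass `a` and attains the one-dimensional minimum `−b²a³/12`. -/
theorem one_dim_minimizer (a b : ℝ) (ha : 0 < a) (hb : 0 < b) :
    (∫ t : ℝ, fab a b t ^ 2) = a ∧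
    (∫ t : ℝ, deriv (fab a b) t ^ 2) - b * (∫ t : ℝ, fab a b t ^ 4)
      = -(b ^ 2 * a ^ 3) / 12 := by
  have hfab : fab a b = fun t => a * √b / 2 * (cosh (a * b / 2 * t))⁻¹ := by
    funext t
    rw [fab, mul_div_right_comm (a * b)]
  have hk : 0 < a * b / 2 := by positivity
  have hsqrt : √b ^ 2 = b := sq_sqrt hb.le
  rw [hfab, integral_mul_inv_cosh_sq hk, integral_deriv_mul_inv_cosh_sq hk,
    integral_mul_inv_cosh_pow_four hk]
  constructor
  · field_simp
    exact hsqrt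
  · field_simp
    rw [hsqrt]
    ring
end
end

section
/- For every φ ∈ C_c^∞(ℝ³,ℂ) and every b > 0 one has ‖∂₃φ‖² − b ∫_ℝ ( ∫_{ℝ²} |φ(x_⊥,x₃)|² dx_⊥ )² dx₃ ≥ − (b²/12) ‖φ‖⁶, where ‖·‖ denotes the L²(ℝ³) norm and ∂₃φ is the partial derivative of φ with respect to the third variable. -/
open MeasureTheory

noncomputable section

/-!
Write `ρ(t) = ∫ |φ(x_⊥,t)|² dx_⊥`, `τ(t) = ∫ |∂₃φ(x_⊥,t)|² dx_⊥` and `M = ∫ ρ`. Differentiating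
under the integral, `ρ' = σ` with `σ(t) = ∫ 2 Re(φ̄ ∂₃φ)(x_⊥,t) dx_⊥`, and `|∂₃φ - cφ|² ≥ 0`
gives `c σ ≤ τ + c² ρ` for every real `c`. Let `G` be the primitive of `ρ` centred so that it runs
from `-M/2` to `M/2`. Integrating by parts, `b ∫ ρ² = ∫ (-b G) σ ≤ ∫ τ + b² ∫ G² ρ`, and
`∫ G² ρ = [G³/3] = M³/12`.
-/

open Set Function

lemma HasCompactSupport.exists_support_subset_Ioc {E : Type*} [Zero E] {f : ℝ → E}
    (hf : HasCompactSupport f) : ∃ a c, support f ⊆ Ioc a c := by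
  obtain ⟨r, hr⟩ := hf.isCompact.isBounded.subset_closedBall 0
  rw [Real.closedBall_eq_Icc, zero_sub, zero_add] at hr
  exact ⟨-r - 1, r, fun t ht => ⟨by linarith [(hr (subset_tsupport f ht)).1],
    (hr (subset_tsupport f ht)).2⟩⟩

lemma integral_sq_mul_eq_of_hasDerivAt {ρ G : ℝ → ℝ} {a c : ℝ} (hρ : Continuous ρ)
    (hsupp : support ρ ⊆ Ioc a c) (hG : ∀ t, HasDerivAt G (ρ t) t) :
    ∫ t, G t ^ 2 * ρ t = (G c ^ 3 - G a ^ 3) / 3 := by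
  have hGc : Continuous G := continuous_iff_continuousAt.2 fun t => (hG t).continuousAt
  rw [← intervalIntegral.integral_eq_integral_of_support_subset
    ((support_mul_subset_right (fun t => G t ^ 2) ρ).trans hsupp),
    intervalIntegral.integral_eq_sub_of_hasDerivAt (f := fun t => G t ^ 3 / 3)
      (f' := fun t => G t ^ 2 * ρ t)
      (fun t _ => ((hG t).pow 3).div_const 3 |>.congr_deriv (by ring))
      (((hGc.pow 2).mul hρ).intervalIntegrable _ _)]
  ring

/-- `hστ` is the square-root-free form of `|σ| ≤ 2 √(ρ τ)`. -/
theorem mul_integral_sq_le_of_hasDerivAt {ρ σ τ : ℝ → ℝ} (hρ : ∀ t, HasDerivAt ρ (σ t) t)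
    (hσ : Continuous σ) (hρcs : HasCompactSupport ρ) (hτ : Integrable τ)
    (hστ : ∀ t c, c * σ t ≤ τ t + c ^ 2 * ρ t) (b : ℝ) :
    b * ∫ t, ρ t ^ 2 ≤ (∫ t, τ t) + b ^ 2 / 12 * (∫ t, ρ t) ^ 3 := by
  have hρc : Continuous ρ := continuous_iff_continuousAt.2 fun t => (hρ t).continuousAt
  have hσcs : HasCompactSupport σ := (funext fun t => (hρ t).deriv : deriv ρ = σ) ▸ hρcs.deriv
  obtain ⟨a, c, hsupp⟩ := hρcs.exists_support_subset_Ioc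
  set M := ∫ t, ρ t
  set G : ℝ → ℝ := fun t => (∫ s in a..t, ρ s) - M / 2 with hGdef
  have hG : ∀ t, HasDerivAt G (ρ t) t := fun t =>
    (intervalIntegral.integral_hasDerivAt_right (hρc.intervalIntegrable _ _)
      (hρc.stronglyMeasurableAtFilter _ _) hρc.continuousAt).sub_const _
  have hGc : Continuous G := continuous_iff_continuousAt.2 fun t => (hG t).continuousAt
  have parts : ∫ t, ρ t ^ 2 = -∫ t, σ t * G t := by
    simp_rw [sq]
    exact integral_mul_deriv_eq_deriv_mul_of_integrable (fun t _ => hρ t) (fun t _ => hG t)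
      ((hρc.mul hρc).integrable_of_hasCompactSupport hρcs.mul_right)
      ((hσ.mul hGc).integrable_of_hasCompactSupport hσcs.mul_right)
      ((hρc.mul hGc).integrable_of_hasCompactSupport hρcs.mul_right)
  have cube : ∫ t, G t ^ 2 * ρ t = M ^ 3 / 12 := by
    rw [integral_sq_mul_eq_of_hasDerivAt hρc hsupp hG]
    simp only [hGdef, intervalIntegral.integral_same,
      intervalIntegral.integral_eq_integral_of_support_subset hsupp]
    ring
  have hGσ : Integrable fun t => -b * G t * σ t :=
    ((continuous_const.mul hGc).mul hσ).integrable_of_hasCompactSupport hσcs.mul_left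
  have hGρ : Integrable fun t => b ^ 2 * (G t ^ 2 * ρ t) :=
    (continuous_const.mul ((hGc.pow 2).mul hρc)).integrable_of_hasCompactSupport
      hρcs.mul_left.mul_left
  calc b * ∫ t, ρ t ^ 2 = ∫ t, -b * G t * σ t := by
        rw [parts, ← integral_neg, ← integral_const_mul]; congr 1; ext t; ring
    _ ≤ ∫ t, (τ t + b ^ 2 * (G t ^ 2 * ρ t)) :=
        integral_mono hGσ (hτ.add hGρ) fun t => (hστ t _).trans_eq (by ring)
    _ = (∫ t, τ t) + b ^ 2 / 12 * M ^ 3 := by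
        rw [integral_add hτ hGρ, integral_const_mul, cube]; ring

section Slice
variable {X E : Type*} [TopologicalSpace X] [NormedAddCommGroup E] {g g' : X × ℝ → E}

lemma HasCompactSupport.slice [T2Space X] (hg : HasCompactSupport g) (t : ℝ) :
    HasCompactSupport fun x => g (x, t) :=
  .intro (hg.image continuous_fst) fun _ hx =>
    image_eq_zero_of_notMem_tsupport fun h => hx ⟨_, h, rfl⟩

lemma HasCompactSupport.integral_slice [MeasurableSpace X] [NormedSpace ℝ E] {μ : Measure X}
    (hg : HasCompactSupport g) : HasCompactSupport fun t => ∫ x, g (x, t) ∂μ :=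
  .intro (hg.image continuous_snd) fun t ht => by
    have hzero : ∀ x, g (x, t) = 0 := fun x =>
      image_eq_zero_of_notMem_tsupport fun h => ht ⟨_, h, rfl⟩
    simp [hzero]

variable [T2Space X] [MeasurableSpace X] [OpensMeasurableSpace X] {μ : Measure X}
  [IsFiniteMeasureOnCompacts μ]

lemma Continuous.integrable_slice (hg : Continuous g) (hgc : HasCompactSupport g) (t : ℝ) :
    Integrable (fun x => g (x, t)) μ :=
  (hg.comp (by fun_prop)).integrable_of_hasCompactSupport (hgc.slice t)

lemma Continuous.exists_integrable_bound_slice (hg : Continuous g) (hgc : HasCompactSupport g) :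
    ∃ bound : X → ℝ, Integrable bound μ ∧ ∀ p, ‖g p‖ ≤ bound p.1 := by
  obtain ⟨C, hC⟩ := hg.bounded_above_of_compact_support hgc
  have hK : IsCompact (Prod.fst '' tsupport g) := hgc.image continuous_fst
  refine ⟨(Prod.fst '' tsupport g).indicator fun _ => C, (integrable_indicator_iff
    hK.measurableSet).2 (integrableOn_const hK.measure_lt_top.ne), fun p => ?_⟩
  by_cases hp : p.1 ∈ Prod.fst '' tsupport g
  · simpa [indicator_of_mem hp] using hC p
  · rw [indicator_of_notMem hp, image_eq_zero_of_notMem_tsupport fun h => hp ⟨_, h, rfl⟩,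
      norm_zero]

variable [NormedSpace ℝ E]

lemma Continuous.integral_slice (hg : Continuous g) (hgc : HasCompactSupport g) :
    Continuous fun t => ∫ x, g (x, t) ∂μ := by
  obtain ⟨bound, hbound, hle⟩ := hg.exists_integrable_bound_slice (μ := μ) hgc
  exact continuous_of_dominated (fun t => (hg.integrable_slice hgc t).aestronglyMeasurable)
    (fun t => ae_of_all _ fun x => hle (x, t)) hbound (ae_of_all _ fun x => hg.comp (by fun_prop))

lemma hasDerivAt_integral_slice (hg : Continuous g) (hgc : HasCompactSupport g)
    (hg' : Continuous g') (hg'c : HasCompactSupport g')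
    (hderiv : ∀ p : X × ℝ, HasDerivAt (fun s => g (p.1, s)) (g' p) p.2) (t : ℝ) :
    HasDerivAt (fun t => ∫ x, g (x, t) ∂μ) (∫ x, g' (x, t) ∂μ) t := by
  obtain ⟨bound, hbound, hle⟩ := hg'.exists_integrable_bound_slice (μ := μ) hg'c
  exact (hasDerivAt_integral_of_dominated_loc_of_deriv_le Filter.univ_mem
    (.of_forall fun s => (hg.integrable_slice hgc s).aestronglyMeasurable)
    (hg.integrable_slice hgc t) (hg'.integrable_slice hg'c t).aestronglyMeasurable
    (ae_of_all _ fun x s _ => hle (x, s)) hbound (ae_of_all _ fun x s _ => hderiv (x, s))).2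

variable {F : Type*} [NormedAddCommGroup F] [InnerProductSpace ℝ F]

lemma mul_two_inner_le_norm_sq_add (c : ℝ) (z w : F) :
    c * (2 * inner ℝ z w) ≤ ‖w‖ ^ 2 + c ^ 2 * ‖z‖ ^ 2 := by
  have h := norm_sub_sq_real w (c • z)
  rw [real_inner_smul_right, norm_smul, Real.norm_eq_abs, mul_pow, sq_abs, real_inner_comm] at h
  nlinarith [sq_nonneg ‖w - c • z‖]

theorem mul_integral_sq_integral_slice_le {φ ψ : X × ℝ → F} (hφ : Continuous φ)
    (hφc : HasCompactSupport φ) (hψ : Continuous ψ) (hψc : HasCompactSupport ψ)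
    (hderiv : ∀ p : X × ℝ, HasDerivAt (fun s => φ (p.1, s)) (ψ p) p.2) (b : ℝ) :
    b * ∫ t, (∫ x, ‖φ (x, t)‖ ^ 2 ∂μ) ^ 2
      ≤ (∫ t, ∫ x, ‖ψ (x, t)‖ ^ 2 ∂μ) + b ^ 2 / 12 * (∫ t, ∫ x, ‖φ (x, t)‖ ^ 2 ∂μ) ^ 3 := by
  have hφ2 : Continuous fun p => ‖φ p‖ ^ 2 := by fun_prop
  have hφ2c : HasCompactSupport fun p => ‖φ p‖ ^ 2 := hφc.comp_left (g := (‖·‖ ^ 2)) (by simp)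
  have hψ2 : Continuous fun p => ‖ψ p‖ ^ 2 := by fun_prop
  have hψ2c : HasCompactSupport fun p => ‖ψ p‖ ^ 2 := hψc.comp_left (g := (‖·‖ ^ 2)) (by simp)
  have hφψ : Continuous fun p => 2 * inner ℝ (φ p) (ψ p) := by fun_prop
  have hφψc : HasCompactSupport fun p => 2 * inner ℝ (φ p) (ψ p) :=
    hφc.mono' fun p hp => subset_tsupport φ fun h => hp (by simp [h])
  refine mul_integral_sq_le_of_hasDerivAt (fun t => hasDerivAt_integral_slice hφ2 hφ2c hφψ hφψc
    (fun p => (hderiv p).norm_sq) t) (hφψ.integral_slice hφψc) hφ2c.integral_slice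
    ((hψ2.integral_slice hψ2c).integrable_of_hasCompactSupport hψ2c.integral_slice)
    (fun t c => ?_) b
  rw [← integral_const_mul, ← integral_const_mul, ← integral_add (hψ2.integrable_slice hψ2c t)
    ((hφ2.integrable_slice hφ2c t).const_mul _)]
  exact integral_mono ((hφψ.integrable_slice hφψc t).const_mul c)
    ((hψ2.integrable_slice hψ2c t).add ((hφ2.integrable_slice hφ2c t).const_mul _))
    fun x => mul_two_inner_le_norm_sq_add c _ _
end Slice

theorem one_dim_reduction_bound_general (φ : R3 → ℂ) (hφ : IsCcSmooth φ) (b : ℝ) :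
    (∫ x : R3, ‖d3 φ x‖ ^ 2)
        - b * ∫ x3 : ℝ, (∫ xp : ℝ × ℝ, ‖φ (xp, x3)‖ ^ 2) ^ 2
      ≥ -(b ^ 2 / 12) * L2norm φ ^ 6 := by
  obtain ⟨hsmooth, hcs⟩ := hφ
  have hd3 : Continuous (d3 φ) := (hsmooth.continuous_fderiv (by simp)).clm_apply continuous_const
  have hd3c : HasCompactSupport (d3 φ) :=
    (hcs.fderiv ℝ).comp_left (g := fun L : R3 →L[ℝ] ℂ => L ((0, 0), 1)) rfl
  have hderiv (p : R3) : HasDerivAt (fun s => φ (p.1, s)) (d3 φ p) p.2 :=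
    ((hsmooth.differentiable (by simp)) p).hasFDerivAt.comp_hasDerivAt p.2
      ((hasDerivAt_const _ _).prodMk (hasDerivAt_id _))
  have key := mul_integral_sq_integral_slice_le (μ := volume) hsmooth.continuous hcs hd3 hd3c
    hderiv b
  have hslice {g : R3 → ℂ} (hg : Continuous g) (hgc : HasCompactSupport g) :
      ∫ x : R3, ‖g x‖ ^ 2 = ∫ t, ∫ xp : ℝ × ℝ, ‖g (xp, t)‖ ^ 2 := by
    have hg2 : Continuous fun x : R3 => ‖g x‖ ^ 2 := by fun_prop
    exact integral_prod_symm _ (hg2.integrable_of_hasCompactSupport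
      (hgc.comp_left (g := (‖·‖ ^ 2)) (by simp)))
  have hL2 : L2norm φ ^ 6 = (∫ x : R3, ‖φ x‖ ^ 2) ^ 3 := by
    rw [L2norm, show 6 = 2 * 3 by rfl, pow_mul,
      Real.sq_sqrt (integral_nonneg fun _ => by positivity)]
  rw [hL2, hslice hsmooth.continuous hcs, hslice hd3 hd3c]
  linarith

/-- Corollary: sharp lower bound for general (not necessarily product) functions. -/
theorem one_dim_reduction_bound (φ : R3 → ℂ) (hφ : IsCcSmooth φ) (b : ℝ) (hb : 0 < b) :
    (∫ x : R3, ‖d3 φ x‖ ^ 2)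
        - b * ∫ x3 : ℝ, (∫ xp : ℝ × ℝ, ‖φ (xp, x3)‖ ^ 2) ^ 2
      ≥ -(b ^ 2 / 12) * L2norm φ ^ 6 :=
  one_dim_reduction_bound_general φ hφ b
end
end

section
/- For every B>0, every k_⊥ ∈ ℝ² and all z_⊥, y_⊥ ∈ ℝ² one has ∫_{ℝ²} P₀(z_⊥,x_⊥) e^{i k_⊥·x_⊥} P₀(x_⊥,y_⊥) dx_⊥ = e^{−|k_⊥|²/(2B)} I_{k_⊥}(z_⊥,y_⊥), where I_{k_⊥}(z_⊥,y_⊥) = P₀(z_⊥,y_⊥) e^{k_⊥∧(z_⊥−y_⊥)/2} e^{i k_⊥·(z_⊥+y_⊥)/2} and a∧b = a₁b₂ − a₂b₁ for a,b∈ℝ². -/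
open MeasureTheory

noncomputable section

private lemma helperA (a u1 u2 u3 u4 u5 v1 v2 : ℂ) (h : u1 + u2 + u3 + u4 + u5 = v1 + v2) :
    a * Complex.exp u1 * Complex.exp u2 * Complex.exp u3
      * (a * Complex.exp u4 * Complex.exp u5)
      = a ^ 2 * (Complex.exp v1 * Complex.exp v2) := by
  rw [← Complex.exp_add, ← h, Complex.exp_add, Complex.exp_add, Complex.exp_add,
    Complex.exp_add]
  ring

private lemma helperB (a C S u1 u2 r g f w p : ℂ) (hC : C * (S * S) = a)
    (h : u1 + u2 = r + (g + f + w + p)) :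
    C * (S * Complex.exp u1 * (S * Complex.exp u2))
      = Complex.exp r * (a * Complex.exp g * Complex.exp f * Complex.exp w * Complex.exp p) := by
  have h2 : Complex.exp u1 * Complex.exp u2
      = Complex.exp r * (Complex.exp g * Complex.exp f * Complex.exp w * Complex.exp p) := by
    rw [← Complex.exp_add, h, Complex.exp_add, Complex.exp_add, Complex.exp_add,
      Complex.exp_add]
  calc C * (S * Complex.exp u1 * (S * Complex.exp u2))
      = C * (S * S) * (Complex.exp u1 * Complex.exp u2) := by ring
    _ = a * (Complex.exp r * (Complex.exp g * Complex.exp f * Complex.exp w * Complex.exp p)) := by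
        rw [hC, h2]
    _ = _ := by ring

private lemma quad_exp2m (a b t u Bc : ℂ) (hB : Bc ≠ 0) :
    -(Bc * (a ^ 2 + b ^ 2) / 4)
        - (Bc / 2 * (a + b) + Complex.I * (t - Bc * u / 2)) ^ 2 / (4 * -(Bc / 2))
      = (-(Bc * (a - b) ^ 2 / 8) - t ^ 2 / (2 * Bc) + t * u / 2 - Bc * u ^ 2 / 8)
        + Complex.I * ((a + b) * t / 2 - Bc * (a + b) * u / 4) := by
  have hI : (Bc / 2 * (a + b) + Complex.I * (t - Bc * u / 2)) ^ 2
      = (Bc / 2 * (a + b)) ^ 2 - (t - Bc * u / 2) ^ 2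
        + Complex.I * (2 * (Bc / 2 * (a + b)) * (t - Bc * u / 2)) := by
    linear_combination (t - Bc * u / 2) ^ 2 * Complex.I_sq
  have h0 : ((4 : ℂ) * -(Bc / 2)) = -(2 * Bc) := by ring
  rw [hI, h0, add_div, sub_div]
  have q1 : (Bc / 2 * (a + b)) ^ 2 / -(2 * Bc) = -(Bc * (a + b) ^ 2 / 8) := by
    field_simp; ring
  have q2 : (t - Bc * u / 2) ^ 2 / -(2 * Bc)
      = -(t ^ 2 / (2 * Bc) - t * u / 2 + Bc * u ^ 2 / 8) := by
    field_simp; ring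
  have q3 : Complex.I * (2 * (Bc / 2 * (a + b)) * (t - Bc * u / 2)) / -(2 * Bc)
      = -(Complex.I * ((a + b) * t / 2 - Bc * (a + b) * u / 4)) := by
    field_simp; ring
  rw [q1, q2, q3]
  ring

private lemma quad_exp2p (a b t u Bc : ℂ) (hB : Bc ≠ 0) :
    -(Bc * (a ^ 2 + b ^ 2) / 4)
        - (Bc / 2 * (a + b) + Complex.I * (t + Bc * u / 2)) ^ 2 / (4 * -(Bc / 2))
      = (-(Bc * (a - b) ^ 2 / 8) - t ^ 2 / (2 * Bc) - t * u / 2 - Bc * u ^ 2 / 8)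
        + Complex.I * ((a + b) * t / 2 + Bc * (a + b) * u / 4) := by
  have h := quad_exp2m a b t (-u) Bc hB
  rw [show t - Bc * -u / 2 = t + Bc * u / 2 by ring] at h
  rw [h]
  ring


/-- The kernel identity `∫ P₀(z,x) e^{ik·x} P₀(x,y) dx = e^{−|k|²/2B} I_k(z,y)`. -/
theorem P0_exp_P0_kernel (B : ℝ) (hB : 0 < B) (k z y : ℝ × ℝ) :
    (∫ x : ℝ × ℝ, P0ker B z x
        * Complex.exp (Complex.I * ((k.1 * x.1 + k.2 * x.2 : ℝ) : ℂ)) * P0ker B x y)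
      = ((Real.exp (-(k.1 ^ 2 + k.2 ^ 2) / (2 * B)) : ℝ) : ℂ) * Iker B k z y := by
  have hπ := Real.pi_pos
  have hB0 : (B : ℂ) ≠ 0 := Complex.ofReal_ne_zero.mpr hB.ne'
  have hb : (-((B : ℂ) / 2)).re < 0 := by
    have h : -((B : ℂ) / 2) = ((-(B / 2) : ℝ) : ℂ) := by push_cast; ring
    rw [h, Complex.ofReal_re]; linarith
  set c1 : ℂ := ((B / 2 * (z.1 + y.1) : ℝ) : ℂ)
      + Complex.I * ((k.1 - B * (z.2 - y.2) / 2 : ℝ) : ℂ) with hc1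
  set c2 : ℂ := ((B / 2 * (z.2 + y.2) : ℝ) : ℂ)
      + Complex.I * ((k.2 + B * (z.1 - y.1) / 2 : ℝ) : ℂ) with hc2
  set d1 : ℂ := ((-(B * (z.1 ^ 2 + y.1 ^ 2) / 4) : ℝ) : ℂ) with hd1
  set d2 : ℂ := ((-(B * (z.2 ^ 2 + y.2 ^ 2) / 4) : ℝ) : ℂ) with hd2
  have hpt : ∀ x : ℝ × ℝ,
      P0ker B z x * Complex.exp (Complex.I * ((k.1 * x.1 + k.2 * x.2 : ℝ) : ℂ)) * P0ker B x y
      = ((B / (2 * Real.pi) : ℝ) : ℂ) ^ 2 *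
        (Complex.exp (-((B : ℂ) / 2) * (x.1 : ℂ) ^ 2 + c1 * (x.1 : ℂ) + d1)
          * Complex.exp (-((B : ℂ) / 2) * (x.2 : ℂ) ^ 2 + c2 * (x.2 : ℂ) + d2)) := by
    intro x
    simp only [P0ker, Complex.ofReal_mul, Complex.ofReal_exp]
    refine helperA _ _ _ _ _ _ _ _ ?_
    rw [hc1, hc2, hd1, hd2]
    push_cast
    ring
  have step1 : (∫ x : ℝ × ℝ, P0ker B z x
        * Complex.exp (Complex.I * ((k.1 * x.1 + k.2 * x.2 : ℝ) : ℂ)) * P0ker B x y)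
      = ((B / (2 * Real.pi) : ℝ) : ℂ) ^ 2 *
        ((∫ t : ℝ, Complex.exp (-((B : ℂ) / 2) * (t : ℂ) ^ 2 + c1 * (t : ℂ) + d1))
          * (∫ t : ℝ, Complex.exp (-((B : ℂ) / 2) * (t : ℂ) ^ 2 + c2 * (t : ℂ) + d2))) := by
    simp only [hpt]
    rw [MeasureTheory.integral_const_mul]
    congr 1
    rw [MeasureTheory.Measure.volume_eq_prod]
    exact MeasureTheory.integral_prod_mul
      (fun t : ℝ => Complex.exp (-((B : ℂ) / 2) * (t : ℂ) ^ 2 + c1 * (t : ℂ) + d1))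
      (fun t : ℝ => Complex.exp (-((B : ℂ) / 2) * (t : ℂ) ^ 2 + c2 * (t : ℂ) + d2))
  rw [step1, integral_cexp_quadratic hb c1 d1, integral_cexp_quadratic hb c2 d2]
  have hsq : ((Real.pi : ℂ) / - -((B : ℂ) / 2)) ^ ((1 : ℂ) / 2)
      = ((Real.sqrt (2 * Real.pi / B) : ℝ) : ℂ) := by
    have h1 : ((Real.pi : ℂ) / - -((B : ℂ) / 2)) = ((2 * Real.pi / B : ℝ) : ℂ) := by
      push_cast
      field_simp
    rw [h1, Real.sqrt_eq_rpow, Complex.ofReal_cpow (by positivity) (1 / 2 : ℝ)]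
    norm_num
  rw [hsq]
  conv_rhs => rw [Iker, P0ker]
  simp only [Complex.ofReal_mul, Complex.ofReal_exp]
  refine helperB _ _ _ _ _ _ _ _ _ _ ?_ ?_
  · rw [← Complex.ofReal_mul, Real.mul_self_sqrt (by positivity), ← Complex.ofReal_pow,
      ← Complex.ofReal_mul]
    refine Complex.ofReal_inj.mpr ?_
    field_simp
  · rw [hc1, hc2, hd1, hd2]
    push_cast
    rw [quad_exp2m (z.1 : ℂ) (y.1 : ℂ) (k.1 : ℂ) ((z.2 : ℂ) - (y.2 : ℂ)) (B : ℂ) hB0,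
      quad_exp2p (z.2 : ℂ) (y.2 : ℂ) (k.2 : ℂ) ((z.1 : ℂ) - (y.1 : ℂ)) (B : ℂ) hB0]
    ring
end
end

section
/- For every B>0 and every k_⊥ ∈ ℝ², the integral operator I_{k_⊥} on L²(ℝ²) with kernel I_{k_⊥}(x_⊥,y_⊥) = P₀(x_⊥,y_⊥) e^{k_⊥∧(x_⊥−y_⊥)/2} e^{i k_⊥·(x_⊥+y_⊥)/2} (where a∧b = a₁b₂ − a₂b₁) is a bounded operator, and its operator norm satisfies ‖I_{k_⊥}‖ ≤ 2 e^{|k_⊥|²/(4B)}. -/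
open MeasureTheory

noncomputable section

/-! Up to a phase, `|I_k(x, y)| = g(x - y)` with `g(z) = (B/2π) e^{-B|z|²/4 + k∧z/2}`, a shifted
Gaussian whose integral, by completing the square, is `2 e^{|k|²/4B}`. Schur's test (Cauchy–Schwarz
against the kernel followed by Tonelli) bounds the `L²` operator norm by the larger of the row and
column integrals of `|I_k|`, and by translation invariance both equal `∫ g`. -/

open scoped ENNReal

namespace MeasureTheory

variable {α β : Type*} [MeasurableSpace α] [MeasurableSpace β] {μ : Measure α} {ν : Measure β}

theorem sq_lintegral_mul_le_lintegral_mul_lintegral_mul_sq {k u : β → ℝ≥0∞}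
    (hk : AEMeasurable k ν) (hu : AEMeasurable u ν) :
    (∫⁻ y, k y * u y ∂ν) ^ 2 ≤ (∫⁻ y, k y ∂ν) * ∫⁻ y, k y * u y ^ 2 ∂ν := by
  have hsqrt (t : ℝ≥0∞) : (t ^ (2⁻¹ : ℝ)) ^ (2 : ℝ) = t := by
    rw [← ENNReal.rpow_mul]; norm_num
  have hmul (y : β) : k y ^ (2⁻¹ : ℝ) * (k y ^ (2⁻¹ : ℝ) * u y) = k y * u y := by
    rw [← mul_assoc, ← ENNReal.rpow_add_of_nonneg _ _ (by norm_num) (by norm_num)]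
    norm_num
  -- Hölder with `p = q = 2` applied to `√k · (√k u)`.
  have hCS := ENNReal.lintegral_mul_le_Lp_mul_Lq ν Real.HolderConjugate.two_two
    (hk.pow_const (2⁻¹ : ℝ)) ((hk.pow_const (2⁻¹ : ℝ)).mul hu)
  simp only [Pi.mul_apply, hmul, ENNReal.mul_rpow_of_nonneg _ _ zero_le_two, hsqrt,
    ENNReal.rpow_two] at hCS
  calc (∫⁻ y, k y * u y ∂ν) ^ 2
      ≤ ((∫⁻ y, k y ∂ν) ^ (1 / 2 : ℝ) * (∫⁻ y, k y * u y ^ 2 ∂ν) ^ (1 / 2 : ℝ)) ^ 2 :=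
        pow_le_pow_left₀ zero_le hCS 2
    _ = (∫⁻ y, k y ∂ν) * ∫⁻ y, k y * u y ^ 2 ∂ν := by
        rw [mul_pow, ← ENNReal.rpow_natCast, ← ENNReal.rpow_natCast, ← ENNReal.rpow_mul,
          ← ENNReal.rpow_mul]
        norm_num

theorem lintegral_sq_lintegral_mul_le_of_schur [SFinite μ] [SFinite ν] {k : α → β → ℝ≥0∞}
    (hk : Measurable (Function.uncurry k)) {C : ℝ≥0∞} (hrow : ∀ᵐ x ∂μ, ∫⁻ y, k x y ∂ν ≤ C)
    (hcol : ∀ᵐ y ∂ν, ∫⁻ x, k x y ∂μ ≤ C) {u : β → ℝ≥0∞} (hu : AEMeasurable u ν) :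
    ∫⁻ x, (∫⁻ y, k x y * u y ∂ν) ^ 2 ∂μ ≤ C ^ 2 * ∫⁻ y, u y ^ 2 ∂ν := by
  have hku : AEMeasurable (fun p : α × β => k p.1 p.2 * u p.2 ^ 2) (μ.prod ν) :=
    hk.aemeasurable.mul (hu.pow_const 2).comp_snd
  calc ∫⁻ x, (∫⁻ y, k x y * u y ∂ν) ^ 2 ∂μ
      ≤ ∫⁻ x, C * ∫⁻ y, k x y * u y ^ 2 ∂ν ∂μ := by
        refine lintegral_mono_ae (hrow.mono fun x hx => ?_)
        exact (sq_lintegral_mul_le_lintegral_mul_lintegral_mul_sq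
          hk.of_uncurry_left.aemeasurable hu).trans (by gcongr)
    _ = C * ∫⁻ y, (∫⁻ x, k x y ∂μ) * u y ^ 2 ∂ν := by
        rw [lintegral_const_mul'' C hku.lintegral_prod_right', lintegral_lintegral_swap hku]
        congr 1
        exact lintegral_congr fun y =>
          lintegral_mul_const'' (u y ^ 2) hk.of_uncurry_right.aemeasurable
    _ ≤ C * ∫⁻ y, C * u y ^ 2 ∂ν := by
        gcongr C * ?_
        exact lintegral_mono_ae (hcol.mono fun y hy => by gcongr)
    _ = C ^ 2 * ∫⁻ y, u y ^ 2 ∂ν := by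
        rw [lintegral_const_mul'' C (hu.pow_const 2), ← mul_assoc, sq]

theorem eLpNorm_two_pow_two {E : Type*} [NormedAddCommGroup E] (f : α → E) :
    eLpNorm f 2 μ ^ 2 = ∫⁻ x, ‖f x‖ₑ ^ 2 ∂μ := by
  simpa using eLpNorm_nnreal_pow_eq_lintegral (f := f) (μ := μ) (p := 2) two_ne_zero

theorem eLpNorm_integral_mul_le_of_schur {𝕜 : Type*} [RCLike 𝕜] [SFinite μ] [SFinite ν]
    {K : α → β → 𝕜} (hK : StronglyMeasurable (Function.uncurry K)) {C : ℝ≥0∞}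
    (hrow : ∀ᵐ x ∂μ, ∫⁻ y, ‖K x y‖ₑ ∂ν ≤ C) (hcol : ∀ᵐ y ∂ν, ∫⁻ x, ‖K x y‖ₑ ∂μ ≤ C)
    {f : β → 𝕜} (hf : AEStronglyMeasurable f ν) :
    eLpNorm (fun x => ∫ y, K x y * f y ∂ν) 2 μ ≤ C * eLpNorm f 2 ν := by
  rw [← ENNReal.pow_le_pow_left_iff two_ne_zero, mul_pow, eLpNorm_two_pow_two,
    eLpNorm_two_pow_two]
  calc ∫⁻ x, ‖∫ y, K x y * f y ∂ν‖ₑ ^ 2 ∂μ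
      ≤ ∫⁻ x, (∫⁻ y, ‖K x y‖ₑ * ‖f y‖ₑ ∂ν) ^ 2 ∂μ := by
        gcongr with x
        simpa only [enorm_mul] using enorm_integral_le_lintegral_enorm (fun y => K x y * f y)
    _ ≤ C ^ 2 * ∫⁻ y, ‖f y‖ₑ ^ 2 ∂ν :=
        lintegral_sq_lintegral_mul_le_of_schur hK.enorm hrow hcol hf.enorm

-- Without `MemLp f 2 μ` both sides are the junk value `0`.
theorem sqrt_integral_norm_sq_eq_lpNorm {E : Type*} [NormedAddCommGroup E] {f : α → E}
    (hf : AEStronglyMeasurable f μ) : √(∫ x, ‖f x‖ ^ 2 ∂μ) = lpNorm f 2 μ := by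
  rw [lpNorm_eq_integral_norm_rpow_toReal two_ne_zero ENNReal.ofNat_ne_top hf,
    Real.sqrt_eq_rpow]
  norm_num

theorem MemLp.integral_mul_of_schur {𝕜 : Type*} [RCLike 𝕜] [SFinite μ] [SFinite ν]
    {K : α → β → 𝕜} (hK : StronglyMeasurable (Function.uncurry K)) {C : ℝ} (hC : 0 ≤ C)
    (hrow : ∀ᵐ x ∂μ, ∫⁻ y, ‖K x y‖ₑ ∂ν ≤ ENNReal.ofReal C)
    (hcol : ∀ᵐ y ∂ν, ∫⁻ x, ‖K x y‖ₑ ∂μ ≤ ENNReal.ofReal C)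
    {f : β → 𝕜} (hf : MemLp f 2 ν) :
    MemLp (fun x => ∫ y, K x y * f y ∂ν) 2 μ ∧
      lpNorm (fun x => ∫ y, K x y * f y ∂ν) 2 μ ≤ C * lpNorm f 2 ν := by
  have hbound := eLpNorm_integral_mul_le_of_schur hK hrow hcol hf.1
  have hfinite : ENNReal.ofReal C * eLpNorm f 2 ν ≠ ⊤ :=
    ENNReal.mul_ne_top ENNReal.ofReal_ne_top hf.eLpNorm_ne_top
  have hF : MemLp (fun x => ∫ y, K x y * f y ∂ν) 2 μ :=
    ⟨(hK.aestronglyMeasurable.mul hf.1.comp_snd).integral_prod_right',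
      hbound.trans_lt hfinite.lt_top⟩
  refine ⟨hF, ?_⟩
  rw [← toReal_eLpNorm hF.1, ← toReal_eLpNorm hf.1, ← ENNReal.toReal_ofReal hC,
    ← ENNReal.toReal_mul]
  exact ENNReal.toReal_mono hfinite hbound

end MeasureTheory

open Real

theorem Real.exp_neg_mul_sq_add_mul {a : ℝ} (ha : a ≠ 0) (b x : ℝ) :
    rexp (-a * x ^ 2 + b * x) = rexp (-a * (x + -b / (2 * a)) ^ 2) * rexp (b ^ 2 / (4 * a)) := by
  rw [← Real.exp_add]
  congr 1
  field_simp
  ring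

theorem integrable_exp_neg_mul_sq_add_mul {a : ℝ} (ha : 0 < a) (b : ℝ) :
    Integrable fun x : ℝ => rexp (-a * x ^ 2 + b * x) := by
  simp_rw [Real.exp_neg_mul_sq_add_mul ha.ne']
  exact ((integrable_exp_neg_mul_sq ha).comp_add_right _).mul_const _

theorem integral_exp_neg_mul_sq_add_mul {a : ℝ} (ha : 0 < a) (b : ℝ) :
    ∫ x : ℝ, rexp (-a * x ^ 2 + b * x) = √(π / a) * rexp (b ^ 2 / (4 * a)) := by
  simp_rw [Real.exp_neg_mul_sq_add_mul ha.ne', integral_mul_const]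
  rw [integral_add_right_eq_self (fun x => rexp (-a * x ^ 2)), integral_gaussian]

def IkerAbs (B : ℝ) (k z : ℝ × ℝ) : ℝ :=
  B / (2 * π) * rexp (-B * (z.1 ^ 2 + z.2 ^ 2) / 4 + (k.1 * z.2 - k.2 * z.1) / 2)

theorem continuous_Iker (B : ℝ) (k : ℝ × ℝ) : Continuous (Function.uncurry (Iker B k)) := by
  unfold Function.uncurry Iker P0ker
  fun_prop

theorem norm_Iker {B : ℝ} (hB : 0 ≤ B) (k x y : ℝ × ℝ) :
    ‖Iker B k x y‖ = IkerAbs B k (x - y) := by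
  have hphase (r : ℝ) : ‖Complex.exp (Complex.I * r)‖ = 1 := by
    rw [Complex.norm_exp]; simp
  simp only [Iker, P0ker, norm_mul, Complex.norm_real, Real.norm_eq_abs, hphase, mul_one,
    IkerAbs, Prod.fst_sub, Prod.snd_sub]
  rw [abs_of_nonneg (by positivity), abs_of_nonneg (Real.exp_nonneg _), mul_assoc,
    Real.abs_exp, ← Real.exp_add]

theorem IkerAbs_eq_mul (B : ℝ) (k z : ℝ × ℝ) :
    IkerAbs B k z = B / (2 * π) * rexp (-(B / 4) * z.1 ^ 2 + (-k.2 / 2) * z.1)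
      * rexp (-(B / 4) * z.2 ^ 2 + (k.1 / 2) * z.2) := by
  rw [IkerAbs, mul_assoc, ← Real.exp_add]
  ring_nf

theorem integrable_IkerAbs {B : ℝ} (hB : 0 < B) (k : ℝ × ℝ) : Integrable (IkerAbs B k) := by
  have hB4 : 0 < B / 4 := by positivity
  rw [funext (IkerAbs_eq_mul B k), Measure.volume_eq_prod]
  exact ((integrable_exp_neg_mul_sq_add_mul hB4 _).const_mul _).mul_prod
    (integrable_exp_neg_mul_sq_add_mul hB4 _)

theorem integral_IkerAbs {B : ℝ} (hB : 0 < B) (k : ℝ × ℝ) :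
    ∫ z, IkerAbs B k z = 2 * rexp ((k.1 ^ 2 + k.2 ^ 2) / (4 * B)) := by
  have hB4 : 0 < B / 4 := by positivity
  simp_rw [IkerAbs_eq_mul]
  rw [Measure.volume_eq_prod,
    integral_prod_mul (fun t => B / (2 * π) * rexp (-(B / 4) * t ^ 2 + (-k.2 / 2) * t))
      (fun t => rexp (-(B / 4) * t ^ 2 + (k.1 / 2) * t)), integral_const_mul,
    integral_exp_neg_mul_sq_add_mul hB4, integral_exp_neg_mul_sq_add_mul hB4]
  have hsqrt : √(π / (B / 4)) * √(π / (B / 4)) = π / (B / 4) := Real.mul_self_sqrt (by positivity)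
  calc B / (2 * π) * (√(π / (B / 4)) * rexp ((-k.2 / 2) ^ 2 / (4 * (B / 4))))
        * (√(π / (B / 4)) * rexp ((k.1 / 2) ^ 2 / (4 * (B / 4))))
      = B / (2 * π) * (√(π / (B / 4)) * √(π / (B / 4)))
        * rexp ((-k.2 / 2) ^ 2 / (4 * (B / 4)) + (k.1 / 2) ^ 2 / (4 * (B / 4))) := by
        rw [Real.exp_add]; ring
    _ = 2 * rexp ((k.1 ^ 2 + k.2 ^ 2) / (4 * B)) := by
        rw [hsqrt]
        congr 1
        · field_simp; ring
        · congr 1; field_simp; ring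

theorem lintegral_ofReal_IkerAbs {B : ℝ} (hB : 0 < B) (k : ℝ × ℝ) :
    ∫⁻ z, ENNReal.ofReal (IkerAbs B k z)
      = ENNReal.ofReal (2 * rexp ((k.1 ^ 2 + k.2 ^ 2) / (4 * B))) := by
  rw [← integral_IkerAbs hB k, ofReal_integral_eq_lintegral_ofReal (integrable_IkerAbs hB k)
    (ae_of_all _ fun z => by unfold IkerAbs; positivity)]

theorem lintegral_enorm_Iker_left {B : ℝ} (hB : 0 < B) (k x : ℝ × ℝ) :
    ∫⁻ y, ‖Iker B k x y‖ₑ = ENNReal.ofReal (2 * rexp ((k.1 ^ 2 + k.2 ^ 2) / (4 * B))) := by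
  simp_rw [← ofReal_norm, norm_Iker hB.le]
  rw [lintegral_sub_left_eq_self (fun z => ENNReal.ofReal (IkerAbs B k z)) x,
    lintegral_ofReal_IkerAbs hB]

theorem lintegral_enorm_Iker_right {B : ℝ} (hB : 0 < B) (k y : ℝ × ℝ) :
    ∫⁻ x, ‖Iker B k x y‖ₑ = ENNReal.ofReal (2 * rexp ((k.1 ^ 2 + k.2 ^ 2) / (4 * B))) := by
  simp_rw [← ofReal_norm, norm_Iker hB.le]
  rw [lintegral_sub_right_eq_self (fun z => ENNReal.ofReal (IkerAbs B k z)) y,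
    lintegral_ofReal_IkerAbs hB]

/-- The integral operator with kernel `I_{k_⊥}` is bounded on `L²(ℝ²)` with norm
at most `2 e^{|k_⊥|²/4B}`. -/
theorem Iker_operator_bound (B : ℝ) (hB : 0 < B) (k : ℝ × ℝ) (f : ℝ × ℝ → ℂ)
    (hf : MemLp f 2 (volume : Measure (ℝ × ℝ))) :
    MemLp (fun x : ℝ × ℝ => ∫ y : ℝ × ℝ, Iker B k x y * f y) 2
        (volume : Measure (ℝ × ℝ)) ∧
    Real.sqrt (∫ x : ℝ × ℝ, ‖∫ y : ℝ × ℝ, Iker B k x y * f y‖ ^ 2)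
      ≤ 2 * Real.exp ((k.1 ^ 2 + k.2 ^ 2) / (4 * B))
        * Real.sqrt (∫ y : ℝ × ℝ, ‖f y‖ ^ 2) := by
  obtain ⟨hF, hbound⟩ := hf.integral_mul_of_schur (continuous_Iker B k).stronglyMeasurable
    (by positivity) (ae_of_all _ fun x => (lintegral_enorm_Iker_left hB k x).le)
    (ae_of_all _ fun y => (lintegral_enorm_Iker_right hB k y).le)
  refine ⟨hF, ?_⟩
  rwa [sqrt_integral_norm_sq_eq_lpNorm hF.1, sqrt_integral_norm_sq_eq_lpNorm hf.1]
end
end
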